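/- arXiv:1803.00006 — 9 statements merged into one kernel-verified Lean document; each statement's English description precedes it below -/
import Mathlib

section
/- In any 2-part 2-design, the number of blocks satisfies b ≥ v1 + v2 - 1. -/
/-!
Fisher-type argument with incidence vectors in `ℚ^b`. A point `x` (cancer type or drug) gives the
vector of blocks containing it. Double counting shows that every point of one part lies in the same
number `r` of blocks, and `r > λ`, so the Gram matrix of each part is `(r - λ) I + λ J`, while
vectors from different parts always have inner product `λ₁₂`. Taking inner products of a linear
relation with each vector then forces the relation to be trivial once one drug vector is dropped.
That one has to go because `∑ₓ uₓ / k₁ = 1 = ∑ᵧ wᵧ / k₂`. This leaves `v₁ + v₂ - 1` independent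
vectors in a space of dimension `b`.
-/

open Finset

section DoubleCounting

variable {α β : Type*} [Fintype α] [Fintype β] [DecidableEq α]

theorem card_filter_mem_mul_pred (S : β → Finset α) {k l : ℕ} (hS : ∀ i, #(S i) = k)
    (hl : ∀ x y, x ≠ y → #{i | x ∈ S i ∧ y ∈ S i} = l) (x : α) :
    #{i | x ∈ S i} * (k - 1) = (Fintype.card α - 1) * l := by
  have := card_mul_eq_card_mul (s := {i | x ∈ S i}) (t := univ.erase x) (fun i y => y ∈ S i)
    (m := k - 1) (n := l)
    (fun i hi => by
      rw [bipartiteAbove, filter_erase, filter_univ_mem, card_erase_of_mem (by simpa using hi), hS])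
    (fun y hy => by
      rw [bipartiteBelow, filter_filter]
      exact hl x y (ne_of_mem_erase hy).symm)
  rwa [card_erase_of_mem (mem_univ x), card_univ] at this

theorem exists_lt_forall_card_filter_mem_eq (S : β → Finset α) {k l : ℕ} (hS : ∀ i, #(S i) = k)
    (hk : 1 < k) (hkα : k < Fintype.card α) (hl₀ : 0 < l)
    (hl : ∀ x y, x ≠ y → #{i | x ∈ S i ∧ y ∈ S i} = l) :
    ∃ r, l < r ∧ ∀ x, #{i | x ∈ S i} = r := by
  obtain ⟨x₀⟩ : Nonempty α := Fintype.card_pos_iff.mp (by omega)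
  have hr := card_filter_mem_mul_pred S hS hl
  refine ⟨#{i | x₀ ∈ S i}, ?_, fun x => ?_⟩
  · refine Nat.lt_of_mul_lt_mul_right (a := k - 1) ?_
    rw [hr, mul_comm]
    exact Nat.mul_lt_mul_of_pos_right (by omega) hl₀
  · exact Nat.eq_of_mul_eq_mul_right (by omega : 0 < k - 1) ((hr x).trans (hr x₀).symm)

end DoubleCounting

section Incidence

variable (K : Type*) [Semiring K] {α γ β : Type*} [DecidableEq α] [DecidableEq γ] [Fintype β]

def incidenceVector (S : β → Finset α) (x : α) : β → K := fun i => if x ∈ S i then 1 else 0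

theorem incidenceVector_dotProduct (S : β → Finset α) (T : β → Finset γ) (x : α) (y : γ) :
    incidenceVector K S x ⬝ᵥ incidenceVector K T y = #{i | x ∈ S i ∧ y ∈ T i} := by
  simp [dotProduct, incidenceVector, ← ite_and, sum_boole, and_comm]

theorem incidenceVector_dotProduct_eq_ite (S : β → Finset α) {r l : ℕ}
    (hr : ∀ x, #{i | x ∈ S i} = r) (hl : ∀ x y, x ≠ y → #{i | x ∈ S i ∧ y ∈ S i} = l)
    (x y : α) :
    incidenceVector K S x ⬝ᵥ incidenceVector K S y = if x = y then (r : K) else l := by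
  rw [incidenceVector_dotProduct]
  split_ifs with h
  · simp [h, hr]
  · rw [hl x y h]

end Incidence

theorem sum_mul_ite_eq {ι R : Type*} [Fintype ι] [DecidableEq ι] [CommRing R] (a : ι → R)
    (r l : R) (j : ι) :
    ∑ i, a i * (if i = j then r else l) = a j * (r - l) + l * ∑ i, a i := by
  have : ∀ i, a i * (if i = j then r else l) = (if i = j then a i * (r - l) else 0) + l * a i := by
    intro i; split_ifs <;> ring
  simp [this, sum_add_distrib, mul_sum]

section Gram

variable {K n ι κ : Type*} [Field K] [LinearOrder K] [IsStrictOrderedRing K]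
  [Fintype n] [Fintype ι] [DecidableEq ι] [Fintype κ] [DecidableEq κ]
  {u : ι → n → K} {w : κ → n → K} {r₁ l₁ r₂ l₂ m : K}

theorem eq_zero_of_sum_smul_add_sum_smul_eq_zero (hl₁ : 0 ≤ l₁) (hr₁ : l₁ < r₁) (hr₂ : l₂ < r₂)
    (huu : ∀ x x', u x ⬝ᵥ u x' = if x = x' then r₁ else l₁)
    (hww : ∀ y y', w y ⬝ᵥ w y' = if y = y' then r₂ else l₂)
    (huw : ∀ x y, u x ⬝ᵥ w y = m) {a : ι → K} {c : κ → K} {y₀ : κ}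
    (hac : ∑ x, a x • u x + ∑ y, c y • w y = 0) (hc : c y₀ = 0) : a = 0 ∧ c = 0 := by
  set A := ∑ x, a x
  set C := ∑ y, c y
  have hu : ∀ x', a x' * (r₁ - l₁) + l₁ * A + m * C = 0 := by
    intro x'
    have h := congrArg (· ⬝ᵥ u x') hac
    simp only [add_dotProduct, sum_dotProduct, smul_dotProduct, smul_eq_mul, huu,
      sum_mul_ite_eq, zero_dotProduct, dotProduct_comm (w _), huw, ← sum_mul] at h
    linear_combination h
  have hw : ∀ y', c y' * (r₂ - l₂) + l₂ * C + m * A = 0 := by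
    intro y'
    have h := congrArg (· ⬝ᵥ w y') hac
    simp only [add_dotProduct, sum_dotProduct, smul_dotProduct, smul_eq_mul, hww,
      sum_mul_ite_eq, zero_dotProduct, huw, ← sum_mul] at h
    linear_combination h
  have hc₀ : c = 0 := by
    funext y
    have h : c y * (r₂ - l₂) = 0 := by linear_combination hw y - hw y₀ + (r₂ - l₂) * hc
    exact (mul_eq_zero.mp h).resolve_right (sub_ne_zero.mpr hr₂.ne')
  have hC : C = 0 := by simp [C, hc₀]
  have hA : A = 0 := by
    have h := sum_eq_zero fun x' (_ : x' ∈ univ) => hu x'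
    simp only [sum_add_distrib, ← sum_mul, sum_const, card_univ, nsmul_eq_mul, hC] at h
    have hpos : 0 < r₁ - l₁ + Fintype.card ι * l₁ := by
      have := sub_pos.mpr hr₁
      positivity
    refine (mul_eq_zero.mp (?_ : A * (r₁ - l₁ + Fintype.card ι * l₁) = 0)).resolve_right hpos.ne'
    linear_combination h
  refine ⟨funext fun x => ?_, hc₀⟩
  have h : a x * (r₁ - l₁) = 0 := by linear_combination hu x - l₁ * hA - m * hC
  exact (mul_eq_zero.mp h).resolve_right (sub_ne_zero.mpr hr₁.ne')

theorem card_add_card_le_card_add_one [Nonempty κ] (hl₁ : 0 ≤ l₁) (hr₁ : l₁ < r₁)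
    (hr₂ : l₂ < r₂) (huu : ∀ x x', u x ⬝ᵥ u x' = if x = x' then r₁ else l₁)
    (hww : ∀ y y', w y ⬝ᵥ w y' = if y = y' then r₂ else l₂)
    (huw : ∀ x y, u x ⬝ᵥ w y = m) :
    Fintype.card ι + Fintype.card κ ≤ Fintype.card n + 1 := by
  obtain ⟨y₀⟩ := ‹Nonempty κ›
  let f := (Fintype.linearCombination K (Sum.elim u w)).prod (LinearMap.proj (Sum.inr y₀))
  have hf : Function.Injective f := by
    refine (injective_iff_map_eq_zero f).mpr fun g hg => ?_
    obtain ⟨hsum, hg₀⟩ := Prod.mk_eq_zero.mp hg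
    rw [Fintype.linearCombination_apply, Fintype.sum_sum_type] at hsum
    obtain ⟨ha, hc⟩ := eq_zero_of_sum_smul_add_sum_smul_eq_zero hl₁ hr₁ hr₂ huu hww huw hsum hg₀
    ext (x | y)
    exacts [congrFun ha x, congrFun hc y]
  simpa [Module.finrank_prod] using LinearMap.finrank_le_finrank_of_injective hf

end Gram

/-- In any 2-part 2-design, b ≥ v1 + v2 - 1. -/
theorem two_part_fisher_bound
    (v1 v2 b k1 k2 l11 l22 l12 : ℕ)
    (S : Fin b → Finset (Fin v1)) (T : Fin b → Finset (Fin v2))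
    (hS : ∀ i, (S i).card = k1) (hT : ∀ i, (T i).card = k2)
    (hk1 : 1 < k1) (hk1v : k1 < v1) (hk2 : 1 < k2) (hk2v : k2 < v2)
    (hl11 : 0 < l11) (hl22 : 0 < l22)
    (h11 : ∀ x y : Fin v1, x ≠ y →
      (Finset.univ.filter (fun i => x ∈ S i ∧ y ∈ S i)).card = l11)
    (h22 : ∀ x y : Fin v2, x ≠ y →
      (Finset.univ.filter (fun i => x ∈ T i ∧ y ∈ T i)).card = l22)
    (h12 : ∀ (x : Fin v1) (y : Fin v2),
      (Finset.univ.filter (fun i => x ∈ S i ∧ y ∈ T i)).card = l12) :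
    b + 1 ≥ v1 + v2 := by
  obtain ⟨r₁, hl₁r₁, hr₁⟩ :=
    exists_lt_forall_card_filter_mem_eq S hS hk1 (by simpa using hk1v) hl11 h11
  obtain ⟨r₂, hl₂r₂, hr₂⟩ :=
    exists_lt_forall_card_filter_mem_eq T hT hk2 (by simpa using hk2v) hl22 h22
  have : Nonempty (Fin v2) := ⟨⟨0, by omega⟩⟩
  have hcard := card_add_card_le_card_add_one (K := ℚ) (m := l12) (Nat.cast_nonneg l11)
    (by exact_mod_cast hl₁r₁) (by exact_mod_cast hl₂r₂)
    (incidenceVector_dotProduct_eq_ite ℚ S hr₁ h11)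
    (incidenceVector_dotProduct_eq_ite ℚ T hr₂ h22)
    (fun x y => by rw [incidenceVector_dotProduct, h12])
  simpa using hcard
end

section
/- If a 2-part 2-design is c-partitionable, then b ≥ v1 + v2 + c - 2. -/
/-!
Work in `ℝ^b`, coordinates indexed by blocks. Take the incidence vectors `s_x` of the cancer
types, the differences `t_y - t_{y₀}` of the incidence vectors of the drugs, and the differences
`p_j - p_{j₀}` of the indicator vectors of the classes. Each family has Gram matrix `D + m J` with
`D` a positive diagonal matrix and `m ≥ 0` (for the first two because a replication number exceeds
`λ` when blocks are proper subsets), so it is linearly independent. The families are mutually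
orthogonal: `⟪s_x, t_y⟫ = λ₁₂` does not depend on `y`, and by partitionability neither `⟪s_x, p_j⟫`
nor `⟪t_y, p_j⟫` depends on `j`. Hence `v₁ + (v₂ - 1) + (c - 1) ≤ b`.
-/

open Finset
open scoped RealInnerProductSpace

section Gram

variable {ι E : Type*} [NormedAddCommGroup E] [InnerProductSpace ℝ E]

theorem LinearIndependent.sum_elim_of_inner_eq_zero {ι' : Type*} {v : ι → E} {w : ι' → E}
    (hv : LinearIndependent ℝ v) (hw : LinearIndependent ℝ w) (h : ∀ i j, ⟪v i, w j⟫ = 0) :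
    LinearIndependent ℝ (Sum.elim v w) :=
  hv.sum_type hw <| Submodule.IsOrtho.disjoint <| Submodule.isOrtho_span.2 <| by
    rintro _ ⟨i, rfl⟩ _ ⟨j, rfl⟩
    exact h i j

variable [Fintype ι] [DecidableEq ι]

theorem linearIndependent_of_inner_eq_ite_add (v : ι → E) (a : ι → ℝ) (m : ℝ)
    (ha : ∀ i, 0 < a i) (hm : 0 ≤ m)
    (h : ∀ i j, ⟪v i, v j⟫ = (if i = j then a i else 0) + m) : LinearIndependent ℝ v := by
  rw [Fintype.linearIndependent_iff]
  intro g hg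
  have hquad : ∑ i, a i * g i ^ 2 + m * (∑ i, g i) ^ 2 = ⟪∑ i, g i • v i, ∑ i, g i • v i⟫ := by
    simp only [sum_inner, inner_sum, real_inner_smul_left, real_inner_smul_right, h, mul_add,
      sum_add_distrib, mul_ite, mul_zero, sum_ite_eq', mem_univ, if_true, sq, mul_sum, sum_mul]
    congr 1
    · exact sum_congr rfl fun _ _ => by ring
    · exact sum_congr rfl fun _ _ => sum_congr rfl fun _ _ => by ring
  rw [hg, inner_zero_left] at hquad
  have hsq : ∑ i, a i * g i ^ 2 = 0 := by
    have h1 : 0 ≤ ∑ i, a i * g i ^ 2 := sum_nonneg fun i _ => mul_nonneg (ha i).le (sq_nonneg _)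
    nlinarith [mul_nonneg hm (sq_nonneg (∑ i, g i))]
  intro i
  have := (sum_eq_zero_iff_of_nonneg fun i _ => mul_nonneg (ha i).le (sq_nonneg (g i))).mp
    hsq i (mem_univ i)
  simpa [(ha i).ne'] using this

theorem linearIndependent_of_inner_eq_ite (u : ι → E) (r : ι → ℝ) (l : ℝ)
    (h : ∀ i j, ⟪u i, u j⟫ = if i = j then r i else l) (hl : 0 ≤ l) (hr : ∀ i, l < r i) :
    LinearIndependent ℝ u :=
  linearIndependent_of_inner_eq_ite_add u (fun i => r i - l) l (fun i => sub_pos.2 (hr i)) hl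
    fun i j => by rw [h]; split_ifs <;> ring

theorem linearIndependent_sub_of_inner_eq_ite (u : ι → E) (r : ι → ℝ) (l : ℝ)
    (h : ∀ i j, ⟪u i, u j⟫ = if i = j then r i else l) (hr : ∀ i, l < r i) (i₀ : ι) :
    LinearIndependent ℝ fun i : {i // i ≠ i₀} => u i - u i₀ := by
  refine linearIndependent_of_inner_eq_ite_add _ (fun i => r i - l) (r i₀ - l)
    (fun i => sub_pos.2 (hr i)) (sub_pos.2 (hr i₀)).le fun i j => ?_
  have hi : (i : ι) ≠ i₀ := i.2
  have hj : i₀ ≠ (j : ι) := Ne.symm j.2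
  simp only [inner_sub_left, inner_sub_right, h, if_neg hi, if_neg hj, if_true, Subtype.ext_iff]
  split_ifs <;> ring

end Gram

section Incidence

variable {ι α : Type*} [DecidableEq ι]

def indicatorVector (A : Finset ι) : EuclideanSpace ℝ ι :=
  WithLp.toLp 2 fun i => if i ∈ A then 1 else 0

variable [Fintype ι]

theorem inner_indicatorVector (A B : Finset ι) :
    ⟪indicatorVector A, indicatorVector B⟫ = #(A ∩ B) := by
  simp [indicatorVector, PiLp.inner_apply, ← ite_and, filter_and]

theorem inner_indicatorVector_filter (P Q : ι → Prop) [DecidablePred P] [DecidablePred Q] :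
    ⟪indicatorVector {i | P i}, indicatorVector {i | Q i}⟫ = #{i | P i ∧ Q i} := by
  rw [inner_indicatorVector, filter_and]

theorem inner_indicatorVector_sub_eq_zero (P Q Q' : ι → Prop) [DecidablePred P]
    [DecidablePred Q] [DecidablePred Q'] (h : #{i | P i ∧ Q i} = #{i | P i ∧ Q' i}) :
    ⟪indicatorVector {i | P i}, indicatorVector {i | Q i} - indicatorVector {i | Q' i}⟫ = 0 := by
  rw [inner_sub_right, inner_indicatorVector_filter, inner_indicatorVector_filter, h, sub_self]

variable [DecidableEq α] (P : α → ι → Prop) [∀ x, DecidablePred (P x)] {l : ℕ}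

theorem inner_indicatorVector_eq_ite (h : ∀ x y, x ≠ y → #{i | P x i ∧ P y i} = l) (x y : α) :
    ⟪indicatorVector {i | P x i}, indicatorVector {i | P y i}⟫ =
      if x = y then (#{i | P x i} : ℝ) else l := by
  rw [inner_indicatorVector_filter]
  split_ifs with hxy
  · subst hxy
    simp only [and_self]
  · rw [h x y hxy]

variable [Fintype α]

theorem linearIndependent_indicatorVector_of_card_filter_and
    (h : ∀ x y, x ≠ y → #{i | P x i ∧ P y i} = l) (hr : ∀ x, l < #{i | P x i}) :
    LinearIndependent ℝ fun x => indicatorVector {i | P x i} :=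
  linearIndependent_of_inner_eq_ite _ _ _ (inner_indicatorVector_eq_ite P h) (Nat.cast_nonneg l)
    fun x => by exact_mod_cast hr x

theorem linearIndependent_indicatorVector_sub_of_card_filter_and
    (h : ∀ x y, x ≠ y → #{i | P x i ∧ P y i} = l) (hr : ∀ x, l < #{i | P x i}) (x₀ : α) :
    LinearIndependent ℝ fun x : {x // x ≠ x₀} =>
      indicatorVector {i | P x i} - indicatorVector {i | P x₀ i} :=
  linearIndependent_sub_of_inner_eq_ite _ _ _ (inner_indicatorVector_eq_ite P h)
    (fun x => by exact_mod_cast hr x) x₀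

end Incidence

theorem lt_card_filter_mem_of_card_filter_and_eq {ι α : Type*} [Fintype ι] [Fintype α]
    [DecidableEq α] [Nontrivial α] (S : ι → Finset α) (hS : ∀ i, #(S i) < Fintype.card α)
    {l : ℕ} (hl : 0 < l) (h : ∀ x y, x ≠ y → #{i | x ∈ S i ∧ y ∈ S i} = l) (x : α) :
    l < #{i | x ∈ S i} := by
  obtain ⟨y, hyx⟩ := exists_ne x
  obtain ⟨i₀, hi₀⟩ : ∃ i, x ∈ S i := by
    obtain ⟨i, hi⟩ := card_pos.1 ((h x y hyx.symm).symm ▸ hl)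
    exact ⟨i, (mem_filter.1 hi).2.1⟩
  obtain ⟨z, hz⟩ : ∃ z, z ∉ S i₀ := by
    by_contra! hall
    exact (hS i₀).ne (by rw [eq_univ_of_forall hall, card_univ])
  rw [← h x z (fun e => hz (e ▸ hi₀))]
  refine card_lt_card ((ssubset_iff_of_subset fun i hi => ?_).2 ⟨i₀, ?_, ?_⟩)
  all_goals simp_all

/-- If a 2-part 2-design is c-partitionable, then b ≥ v1 + v2 + c - 2. -/
theorem two_part_partitionable_bound
    (v1 v2 b k1 k2 l11 l22 l12 : ℕ)
    (S : Fin b → Finset (Fin v1)) (T : Fin b → Finset (Fin v2))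
    (hS : ∀ i, (S i).card = k1) (hT : ∀ i, (T i).card = k2)
    (hk1 : 1 < k1) (hk1v : k1 < v1) (hk2 : 1 < k2) (hk2v : k2 < v2)
    (hl11 : 0 < l11) (hl22 : 0 < l22)
    (h11 : ∀ x y : Fin v1, x ≠ y →
      (Finset.univ.filter (fun i => x ∈ S i ∧ y ∈ S i)).card = l11)
    (h22 : ∀ x y : Fin v2, x ≠ y →
      (Finset.univ.filter (fun i => x ∈ T i ∧ y ∈ T i)).card = l22)
    (h12 : ∀ (x : Fin v1) (y : Fin v2),
      (Finset.univ.filter (fun i => x ∈ S i ∧ y ∈ T i)).card = l12)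
    (c : ℕ) (hc : 0 < c) (part : Fin b → Fin c)
    (hsize : ∀ j : Fin c, (Finset.univ.filter (fun i => part i = j)).card * c = b)
    (hCconst : ∀ (x : Fin v1) (j j' : Fin c),
      (Finset.univ.filter (fun i => x ∈ S i ∧ part i = j)).card =
      (Finset.univ.filter (fun i => x ∈ S i ∧ part i = j')).card)
    (hDconst : ∀ (y : Fin v2) (j j' : Fin c),
      (Finset.univ.filter (fun i => y ∈ T i ∧ part i = j)).card =
      (Finset.univ.filter (fun i => y ∈ T i ∧ part i = j')).card) :
    b + 2 ≥ v1 + v2 + c := by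
  have : Nontrivial (Fin v1) := Fin.nontrivial_iff_two_le.2 (by omega)
  have : Nontrivial (Fin v2) := Fin.nontrivial_iff_two_le.2 (by omega)
  have hr1 := lt_card_filter_mem_of_card_filter_and_eq S
    (fun i => by rwa [hS i, Fintype.card_fin]) hl11 h11
  have hr2 := lt_card_filter_mem_of_card_filter_and_eq T
    (fun i => by rwa [hT i, Fintype.card_fin]) hl22 h22
  have hb : l11 < b := (hr1 ⟨0, by omega⟩).trans_le ((card_filter_le _ _).trans_eq (card_fin b))
  have hM (j : Fin c) : 0 < #{i | part i = j} :=
    Nat.pos_of_ne_zero fun h0 => by have := hsize j; rw [h0, zero_mul] at this; omega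
  have hdisj (j j' : Fin c) (hjj' : j ≠ j') : #{i | part i = j ∧ part i = j'} = 0 :=
    card_eq_zero.2 (filter_eq_empty_iff.2 fun _ _ h => hjj' (h.1.symm.trans h.2))
  let y₀ : Fin v2 := ⟨0, by omega⟩
  let j₀ : Fin c := ⟨0, hc⟩
  have hs := linearIndependent_indicatorVector_of_card_filter_and _ h11 hr1
  have ht := linearIndependent_indicatorVector_sub_of_card_filter_and _ h22 hr2 y₀
  have hp := linearIndependent_indicatorVector_sub_of_card_filter_and (fun j i => part i = j)
    hdisj hM j₀
  have hli := hs.sum_elim_of_inner_eq_zero (ht.sum_elim_of_inner_eq_zero hp ?_) ?_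
  · have := hli.fintype_card_le_finrank
    simp only [Fintype.card_sum, Fintype.card_fin, Fintype.card_subtype_compl, Fintype.card_unique,
      finrank_euclideanSpace] at this
    omega
  · rintro y j
    rw [inner_sub_left, inner_indicatorVector_sub_eq_zero _ _ _ (hDconst y j j₀),
      inner_indicatorVector_sub_eq_zero _ _ _ (hDconst y₀ j j₀), sub_zero]
  · rintro x (y | j)
    · exact inner_indicatorVector_sub_eq_zero _ _ _ ((h12 x y).trans (h12 x y₀).symm)
    · exact inner_indicatorVector_sub_eq_zero _ _ _ (hCconst x j j₀)
end

section
/- The cartesian product of a 2-(v1,k1,λ) design with b1 blocks and a 2-(v2,k2,μ) design with b2 blocks — taking all b1*b2 blocks (S,T) where S is a block of the first and T a block of the second — is a 2-part 2-design with parameters λ11 = λ*b2, λ22 = μ*b1, and λ12 = r1*r2, where r1, r2 are the replication numbers of the two designs. -/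
open Finset

section ProductFilter

variable {α β : Type*} [Fintype α] [Fintype β]

theorem card_filter_prod_univ (P : α → Prop) (Q : β → Prop) [DecidablePred P]
    [DecidablePred Q] :
    (univ.filter (fun p : α × β => P p.1 ∧ Q p.2)).card
      = (univ.filter P).card * (univ.filter Q).card := by
  rw [← univ_product_univ, filter_product, card_product]

theorem card_filter_fst (P : α → Prop) [DecidablePred P] :
    (univ.filter (fun p : α × β => P p.1)).card = (univ.filter P).card * Fintype.card β := by
  simpa using card_filter_prod_univ (β := β) P (fun _ => True)

theorem card_filter_snd (Q : β → Prop) [DecidablePred Q] :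
    (univ.filter (fun p : α × β => Q p.2)).card = (univ.filter Q).card * Fintype.card α := by
  simpa [mul_comm] using card_filter_prod_univ (α := α) (fun _ => True) Q

end ProductFilter

theorem cartesian_product_two_part_general
    (v1 v2 b1 b2 lam mu r1 r2 : ℕ)
    (A : Fin b1 → Finset (Fin v1)) (B : Fin b2 → Finset (Fin v2))
    (hdes1 : ∀ x y : Fin v1, x ≠ y →
      (Finset.univ.filter (fun i => x ∈ A i ∧ y ∈ A i)).card = lam)
    (hdes2 : ∀ x y : Fin v2, x ≠ y →
      (Finset.univ.filter (fun i => x ∈ B i ∧ y ∈ B i)).card = mu)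
    (hr1 : ∀ x : Fin v1, (Finset.univ.filter (fun i => x ∈ A i)).card = r1)
    (hr2 : ∀ y : Fin v2, (Finset.univ.filter (fun i => y ∈ B i)).card = r2) :
    (∀ x y : Fin v1, x ≠ y →
      (Finset.univ.filter (fun p : Fin b1 × Fin b2 => x ∈ A p.1 ∧ y ∈ A p.1)).card
        = lam * b2) ∧
    (∀ x y : Fin v2, x ≠ y →
      (Finset.univ.filter (fun p : Fin b1 × Fin b2 => x ∈ B p.2 ∧ y ∈ B p.2)).card
        = mu * b1) ∧
    (∀ (x : Fin v1) (y : Fin v2),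
      (Finset.univ.filter (fun p : Fin b1 × Fin b2 => x ∈ A p.1 ∧ y ∈ B p.2)).card
        = r1 * r2) := by
  refine ⟨fun x y hxy => ?_, fun x y hxy => ?_, fun x y => ?_⟩
  · rw [card_filter_fst (fun i => x ∈ A i ∧ y ∈ A i), hdes1 x y hxy, Fintype.card_fin]
  · rw [card_filter_snd (fun i => x ∈ B i ∧ y ∈ B i), hdes2 x y hxy, Fintype.card_fin]
  · rw [card_filter_prod_univ (fun i => x ∈ A i) (fun i => y ∈ B i), hr1 x, hr2 y]

/-- The cartesian product of a 2-(v1,k1,λ) design with b1 blocks and a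
2-(v2,k2,μ) design with b2 blocks is a 2-part 2-design with parameters
λ11 = λ*b2, λ22 = μ*b1 and λ12 = r1*r2. -/
theorem cartesian_product_two_part
    (v1 v2 b1 b2 k1 k2 lam mu r1 r2 : ℕ)
    (A : Fin b1 → Finset (Fin v1)) (B : Fin b2 → Finset (Fin v2))
    (hA : ∀ i, (A i).card = k1) (hB : ∀ i, (B i).card = k2)
    (hk1 : 1 < k1) (hk1v : k1 < v1) (hk2 : 1 < k2) (hk2v : k2 < v2)
    (hdes1 : ∀ x y : Fin v1, x ≠ y →
      (Finset.univ.filter (fun i => x ∈ A i ∧ y ∈ A i)).card = lam)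
    (hdes2 : ∀ x y : Fin v2, x ≠ y →
      (Finset.univ.filter (fun i => x ∈ B i ∧ y ∈ B i)).card = mu)
    (hr1 : ∀ x : Fin v1, (Finset.univ.filter (fun i => x ∈ A i)).card = r1)
    (hr2 : ∀ y : Fin v2, (Finset.univ.filter (fun i => y ∈ B i)).card = r2) :
    (∀ x y : Fin v1, x ≠ y →
      (Finset.univ.filter (fun p : Fin b1 × Fin b2 => x ∈ A p.1 ∧ y ∈ A p.1)).card
        = lam * b2) ∧
    (∀ x y : Fin v2, x ≠ y →
      (Finset.univ.filter (fun p : Fin b1 × Fin b2 => x ∈ B p.2 ∧ y ∈ B p.2)).card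
        = mu * b1) ∧
    (∀ (x : Fin v1) (y : Fin v2),
      (Finset.univ.filter (fun p : Fin b1 × Fin b2 => x ∈ A p.1 ∧ y ∈ B p.2)).card
        = r1 * r2) :=
  cartesian_product_two_part_general v1 v2 b1 b2 lam mu r1 r2 A B hdes1 hdes2 hr1 hr2
end

section
/- Subcartesian product: let Δ2 be a resolved 2-(v2,k2,μ) design with b2 blocks partitioned into r resolution classes (each class a partition of the drug set), and let Δ1 be a 2-(v1,k1,λ) design with b1 blocks where r divides b1. Partition the blocks of Δ1 arbitrarily into r classes of size b1/r, match the classes, and for each matched pair take all cartesian products of a block of the Δ1-class with a block of the Δ2-class. The result is a 2-part 2-design with b1*b2/r blocks. -/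
/-!
Every count is a double count over the two coordinates of a matched pair `(a, b)`. For a fixed
block `a` of `Δ₁`, the blocks matched with it form one resolution class of `Δ₂`, which has
`v₂ / k₂` blocks and exactly one block through each point. For a fixed block `b` of `Δ₂`, the
matched blocks form a class of `b₁ / r` blocks of `Δ₁`. Hence `λ₁₁ = λ v₂ / k₂`,
`λ₂₂ = μ b₁ / r`, and `λ₁₂` is the replication number of `Δ₁`, which does not depend on the
point because `Δ₁` is a 2-design with `k₁ > 1`.
-/

open Finset

section MatchedPairs

variable {α β ι : Type*} [Fintype α] [Fintype β] [DecidableEq ι] (f : α → ι) (g : β → ι)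
  (P : α → Prop) (Q : β → Prop) [DecidablePred P] [DecidablePred Q]

theorem card_filter_matched_of_fst {n : ℕ} (hn : ∀ a, P a → #{b | g b = f a ∧ Q b} = n) :
    #{p : α × β | f p.1 = g p.2 ∧ P p.1 ∧ Q p.2} = #{a | P a} * n := by
  calc #{p : α × β | f p.1 = g p.2 ∧ P p.1 ∧ Q p.2}
      = ∑ a, #{b | f a = g b ∧ P a ∧ Q b} := by simp only [card_filter, Fintype.sum_prod_type]
    _ = ∑ a with P a, #{b | g b = f a ∧ Q b} := by
        rw [sum_filter]
        refine sum_congr rfl fun a _ => ?_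
        by_cases ha : P a <;> simp [ha, eq_comm]
    _ = #{a | P a} * n := sum_const_nat fun a ha => hn a (mem_filter.mp ha).2

theorem card_filter_matched_of_snd {n : ℕ} (hn : ∀ b, Q b → #{a | f a = g b ∧ P a} = n) :
    #{p : α × β | f p.1 = g p.2 ∧ P p.1 ∧ Q p.2} = #{b | Q b} * n := by
  calc #{p : α × β | f p.1 = g p.2 ∧ P p.1 ∧ Q p.2}
      = ∑ b, #{a | f a = g b ∧ P a ∧ Q b} := by
        simp only [card_filter, Fintype.sum_prod_type_right]
    _ = ∑ b with Q b, #{a | f a = g b ∧ P a} := by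
        rw [sum_filter]
        refine sum_congr rfl fun b _ => ?_
        by_cases hb : Q b <;> simp [hb]
    _ = #{b | Q b} * n := sum_const_nat fun b hb => hn b (mem_filter.mp hb).2

end MatchedPairs

section Designs

variable {α ι : Type*} [Fintype α] [Fintype ι] [DecidableEq α] {B : ι → Finset α} {k : ℕ}

theorem card_filter_mul_eq_card_of_existsUnique (hB : ∀ i, #(B i) = k) (p : ι → Prop)
    [DecidablePred p] (hp : ∀ y, ∃! i, p i ∧ y ∈ B i) :
    #{i | p i} * k = Fintype.card α := by
  have h := card_mul_eq_card_mul (fun i y => y ∈ B i) (s := {i | p i}) (t := univ)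
    (m := k) (n := 1) (fun i _ => by simpa [bipartiteAbove, filter_mem_eq_inter] using hB i)
    (fun y _ => by
      simpa [bipartiteBelow, card_eq_one_iff_existsUnique] using hp y)
  simpa using h

theorem card_filter_mem_mul_sub_one_eq {lam : ℕ} (hB : ∀ i, #(B i) = k)
    (hdes : ∀ x y, x ≠ y → #{i | x ∈ B i ∧ y ∈ B i} = lam) (x : α) :
    #{i | x ∈ B i} * (k - 1) = (Fintype.card α - 1) * lam := by
  have h := card_mul_eq_card_mul (fun i y => y ∈ B i) (s := {i | x ∈ B i}) (t := univ.erase x)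
    (m := k - 1) (n := lam)
    (fun i hi => by
      have hx : x ∈ B i := (mem_filter.mp hi).2
      rw [bipartiteAbove, ← hB i, ← card_erase_of_mem hx]
      congr 1; ext; simp [and_comm])
    (fun y hy => by
      rw [bipartiteBelow, filter_filter]
      exact hdes x y (ne_of_mem_erase hy).symm)
  rwa [card_erase_of_mem (mem_univ x), card_univ] at h

theorem card_filter_mem_eq_of_one_lt {lam : ℕ} (hk : 1 < k) (hB : ∀ i, #(B i) = k)
    (hdes : ∀ x y, x ≠ y → #{i | x ∈ B i ∧ y ∈ B i} = lam) (x y : α) :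
    #{i | x ∈ B i} = #{i | y ∈ B i} :=
  Nat.eq_of_mul_eq_mul_right (Nat.sub_pos_of_lt hk)
    ((card_filter_mem_mul_sub_one_eq hB hdes x).trans
      (card_filter_mem_mul_sub_one_eq hB hdes y).symm)

end Designs

/-- Subcartesian product: matching the r resolution classes of a resolved
2-(v2,k2,μ) design with an arbitrary partition of the blocks of a
2-(v1,k1,λ) design into r classes of size b1/r, and taking cartesian products
within matched classes, yields a 2-part 2-design with b1*b2/r blocks. -/
theorem subcartesian_product_two_part
    (v1 v2 b1 b2 k1 k2 lam mu r : ℕ) (hr : 0 < r) (hdvd : r ∣ b1)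
    (A : Fin b1 → Finset (Fin v1)) (B : Fin b2 → Finset (Fin v2))
    (hA : ∀ i, (A i).card = k1) (hB : ∀ i, (B i).card = k2)
    (hk1 : 1 < k1) (hk1v : k1 < v1) (hk2 : 1 < k2) (hk2v : k2 < v2)
    (hlam : 0 < lam) (hmu : 0 < mu)
    (hdes1 : ∀ x y : Fin v1, x ≠ y →
      (Finset.univ.filter (fun i => x ∈ A i ∧ y ∈ A i)).card = lam)
    (hdes2 : ∀ x y : Fin v2, x ≠ y →
      (Finset.univ.filter (fun i => x ∈ B i ∧ y ∈ B i)).card = mu)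
    (g1 : Fin b1 → Fin r) (g2 : Fin b2 → Fin r)
    (hclass1 : ∀ j : Fin r, (Finset.univ.filter (fun i => g1 i = j)).card * r = b1)
    (hres2 : ∀ (j : Fin r) (y : Fin v2), ∃! i : Fin b2, g2 i = j ∧ y ∈ B i) :
    ((Finset.univ.filter (fun p : Fin b1 × Fin b2 => g1 p.1 = g2 p.2)).card * r
       = b1 * b2) ∧
    (∃ l11 > 0, ∀ x y : Fin v1, x ≠ y →
      ((Finset.univ.filter (fun p : Fin b1 × Fin b2 => g1 p.1 = g2 p.2)).filter
        (fun p => x ∈ A p.1 ∧ y ∈ A p.1)).card = l11) ∧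
    (∃ l22 > 0, ∀ x y : Fin v2, x ≠ y →
      ((Finset.univ.filter (fun p : Fin b1 × Fin b2 => g1 p.1 = g2 p.2)).filter
        (fun p => x ∈ B p.2 ∧ y ∈ B p.2)).card = l22) ∧
    (∃ l12, ∀ (x : Fin v1) (y : Fin v2),
      ((Finset.univ.filter (fun p : Fin b1 × Fin b2 => g1 p.1 = g2 p.2)).filter
        (fun p => x ∈ A p.1 ∧ y ∈ B p.2)).card = l12) := by
  have hb1 : 0 < b1 := by
    have hpair := hdes1 ⟨0, by omega⟩ ⟨1, by omega⟩ (by simp [Fin.ext_iff])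
    obtain ⟨i, -⟩ := card_pos.mp (hpair ▸ hlam)
    exact i.pos
  have hm : ∀ j, #{i | g1 i = j} = b1 / r := fun j =>
    Nat.eq_div_of_mul_eq_left hr.ne' (hclass1 j)
  have hc : ∀ j, #{i | g2 i = j} = v2 / k2 := fun j => Nat.eq_div_of_mul_eq_left (by omega)
    (by simpa using card_filter_mul_eq_card_of_existsUnique hB _ (hres2 j))
  have hone : ∀ j y, #{i | g2 i = j ∧ y ∈ B i} = 1 := fun j y =>
    card_eq_one_iff_existsUnique.mpr (by simpa using hres2 j y)
  refine ⟨?_, ⟨lam * (v2 / k2), ?_, fun x y hxy => ?_⟩, ⟨mu * (b1 / r), ?_, fun x y hxy => ?_⟩,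
    ⟨#{i | (⟨0, by omega⟩ : Fin v1) ∈ A i}, fun x y => ?_⟩⟩
  · have h := card_filter_matched_of_snd g1 g2 (fun _ => True) (fun _ => True)
      (by simpa using fun b => hm (g2 b))
    simp only [and_true] at h
    rw [h, mul_assoc, Nat.div_mul_cancel hdvd, filter_true, card_fin, mul_comm]
  · exact Nat.mul_pos hlam (Nat.div_pos hk2v.le (by omega))
  · simpa [filter_filter, hdes1 x y hxy] using card_filter_matched_of_fst g1 g2
      (fun a => x ∈ A a ∧ y ∈ A a) (fun _ => True) fun a _ => by simpa using hc (g1 a)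
  · exact Nat.mul_pos hmu (Nat.div_pos (Nat.le_of_dvd hb1 hdvd) hr)
  · simpa [filter_filter, hdes2 x y hxy] using card_filter_matched_of_snd g1 g2
      (fun _ => True) (fun b => x ∈ B b ∧ y ∈ B b) fun b _ => by simpa using hm (g2 b)
  · rw [filter_filter, ← card_filter_mem_eq_of_one_lt hk1 hA hdes1 x]
    simpa using
      card_filter_matched_of_fst g1 g2 (fun a => x ∈ A a) (fun b => y ∈ B b)
        (fun a _ => hone (g1 a) y)
end

section
/- Hadamard construction: let H be a Hadamard matrix of order 4n (n ≥ 2) whose first row is all +1. Identify the 2n cancer types with the columns where the second row is +1 and the 2n drugs with the columns where the second row is -1. Each of the remaining 4n-2 rows yields two blocks: one consisting of the cancer types and drugs in the columns with entry +1, the other those with entry -1. The resulting 8n-4 blocks form a 2-part 2-design with v1 = v2 = 2n, k1 = k2 = n, λ11 = λ22 = 2n-2, and λ12 = 2n-1. -/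
/-!
Over `ℤ`, `H Hᵀ = 4n • 1` forces `Hᵀ H = 4n • 1` as well, so both the rows and the columns of `H`
are orthogonal. Orthogonality to the all-ones row balances every other row; orthogonality to the
second row then balances each remaining row on the cancer half and on the drug half separately,
so every block has `n` elements of each kind. Two distinct columns agree in exactly `2n` rows, and
the blocks containing both are in bijection with the agreeing rows other than the first two. The
first row always agrees, the second agrees exactly for a pair within one part, which leaves
`2n - 2` blocks for such a pair and `2n - 1` for a mixed one.
-/

open Finset

section PlusMinusOne

variable {α : Type*} {s : Finset α} {g : α → ℤ}

lemma sum_filter_eq_one_add_sum_filter_eq_neg_one (hg : ∀ x ∈ s, g x = 1 ∨ g x = -1)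
    (f : α → ℤ) :
    ∑ x ∈ s with g x = 1, f x + ∑ x ∈ s with g x = -1, f x = ∑ x ∈ s, f x := by
  have hneg : {x ∈ s | g x = -1} = {x ∈ s | ¬g x = 1} :=
    filter_congr fun x hx => by rcases hg x hx with h | h <;> simp [h]
  rw [hneg, sum_filter_add_sum_filter_not]

lemma sum_mul_eq_sum_filter_eq_one_sub_sum_filter_eq_neg_one
    (hg : ∀ x ∈ s, g x = 1 ∨ g x = -1) (f : α → ℤ) :
    ∑ x ∈ s, g x * f x = ∑ x ∈ s with g x = 1, f x - ∑ x ∈ s with g x = -1, f x := by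
  rw [← sum_filter_eq_one_add_sum_filter_eq_neg_one hg, sub_eq_add_neg, ← sum_neg_distrib]
  congr 1 <;> refine sum_congr rfl fun x hx => ?_ <;> simp [(mem_filter.mp hx).2]

lemma sum_filter_eq_zero_of_sum_mul_eq_zero (hg : ∀ x ∈ s, g x = 1 ∨ g x = -1) {f : α → ℤ}
    (hf : ∑ x ∈ s, f x = 0) (hgf : ∑ x ∈ s, g x * f x = 0) {c : ℤ} (hc : c = 1 ∨ c = -1) :
    ∑ x ∈ s with g x = c, f x = 0 := by
  have hadd := sum_filter_eq_one_add_sum_filter_eq_neg_one hg f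
  have hsub := sum_mul_eq_sum_filter_eq_one_sub_sum_filter_eq_neg_one hg f
  rcases hc with rfl | rfl <;> linarith

lemma two_mul_card_filter_eq_of_sum_eq_zero (hg : ∀ x ∈ s, g x = 1 ∨ g x = -1)
    (hsum : ∑ x ∈ s, g x = 0) {c : ℤ} (hc : c = 1 ∨ c = -1) :
    2 * #{x ∈ s | g x = c} = #s := by
  have hadd := sum_filter_eq_one_add_sum_filter_eq_neg_one hg 1
  have hsub := sum_mul_eq_sum_filter_eq_one_sub_sum_filter_eq_neg_one hg 1
  simp only [Pi.one_apply, sum_const, nsmul_eq_mul, mul_one] at hadd hsub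
  rcases hc with rfl | rfl <;> omega

lemma bool_ite_eq_one_or_eq_neg_one (e : Bool) :
    (if e then (1 : ℤ) else -1) = 1 ∨ (if e then (1 : ℤ) else -1) = -1 := by
  cases e <;> simp

end PlusMinusOne

section Counting

variable {ι : Type*} [Fintype ι]

lemma card_filter_fst_eq_two_mul (p : ι → Prop) [DecidablePred p] :
    #{t : ι × Bool | p t.1} = 2 * #{i | p i} := by
  rw [← univ_product_univ, filter_product_left, card_product, card_univ, Fintype.card_bool,
    mul_comm]

lemma card_filter_prod_bool_eq_card_filter_eq (p : ι → Prop) [DecidablePred p] {a b : ι → ℤ}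
    (ha : ∀ i, a i = 1 ∨ a i = -1) :
    #{t : ι × Bool | p t.1 ∧ a t.1 = (if t.2 then 1 else -1) ∧ b t.1 = (if t.2 then 1 else -1)}
      = #{i | p i ∧ a i = b i} := by
  refine card_nbij' Prod.fst (fun i => (i, decide (a i = 1))) ?_ ?_ ?_ ?_
  · intro t ht
    simp only [coe_filter, mem_univ, true_and, Set.mem_ofPred_eq] at ht ⊢
    exact ⟨ht.1, ht.2.1.trans ht.2.2.symm⟩
  · intro i hi
    simp only [coe_filter, mem_univ, true_and, Set.mem_ofPred_eq] at hi ⊢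
    rcases ha i with h | h <;> simp [h, hi.1, ← hi.2]
  · rintro ⟨i, e⟩ ht
    simp only [coe_filter, mem_univ, true_and, Set.mem_ofPred_eq] at ht
    cases e <;> simp [ht.2.1]
  · intro i _
    rfl

lemma card_filter_ne_and_ne_and [DecidableEq ι] {a b : ι} (hab : a ≠ b) (P : ι → Prop)
    [DecidablePred P] :
    #{i | i ≠ a ∧ i ≠ b ∧ P i} + (if P a then 1 else 0) + (if P b then 1 else 0) = #{i | P i} := by
  have hset :
      ({i | i ≠ a ∧ i ≠ b ∧ P i} : Finset ι) = (({i | P i} : Finset ι).erase b).erase a := by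
    ext i
    simp only [mem_filter, mem_univ, true_and, mem_erase]
  rw [hset]
  by_cases ha : P a <;> by_cases hb : P b <;> simp only [ha, hb, if_true, if_false, add_zero]
  · rw [card_erase_add_one (by simp [hab, ha]), card_erase_add_one (by simp [hb])]
  · rw [card_erase_add_one (by simp [hab, ha]), erase_eq_of_notMem (by simp [hb])]
  · rw [erase_eq_of_notMem (by simp [ha]), card_erase_add_one (by simp [hb])]
  · rw [erase_eq_of_notMem (by simp [ha]), erase_eq_of_notMem (by simp [hb])]

lemma card_filter_fst_ne_and_ne [DecidableEq ι] {a b : ι} (hab : a ≠ b) :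
    #{t : ι × Bool | t.1 ≠ a ∧ t.1 ≠ b} = 2 * (Fintype.card ι - 2) := by
  have hrows := card_filter_ne_and_ne_and hab (fun _ => True)
  simp only [and_true, if_true, filter_true, card_univ] at hrows
  rw [card_filter_fst_eq_two_mul (fun i => i ≠ a ∧ i ≠ b)]
  omega

end Counting

namespace Matrix

variable {n : Type*} [Fintype n] [DecidableEq n]

lemma isHadamard_of_mul_transpose [Nonempty n] {A : Matrix n n ℤ}
    (hpm : ∀ i j, A i j = 1 ∨ A i j = -1)
    (hmul : A * Aᵀ = (Fintype.card n : ℤ) • 1) : A.IsHadamard :=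
  IsHadamard.of_mul_conjTranspose (fun i j => Unitary.mem_iff_eq_one_or_eq_neg_one.mpr (hpm i j))
    (by rwa [conjTranspose_eq_transpose_of_trivial])
    (IsRegular.of_ne_zero (by simp))

variable {A : Matrix n n ℤ}

lemma IsHadamard.sum_mul_eq_zero_of_ne (hA : A.IsHadamard) {i k : n} (hik : i ≠ k) :
    ∑ j, A i j * A k j = 0 := by
  simpa [mul_apply, hik] using congr_fun (congr_fun hA.mul_conjTranspose i) k

lemma IsHadamard.sum_eq_zero_of_ne (hA : A.IsHadamard) {i k : n} (hk : ∀ j, A k j = 1)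
    (hik : i ≠ k) : ∑ j, A i j = 0 := by
  simpa [hk] using hA.sum_mul_eq_zero_of_ne hik

lemma IsHadamard.apply_eq_one_or_eq_neg_one (hA : A.IsHadamard) (i j : n) :
    A i j = 1 ∨ A i j = -1 :=
  Unitary.mem_iff_eq_one_or_eq_neg_one.mp (hA.apply_mem i j)

lemma IsHadamard.two_mul_card_filter_apply_eq (hA : A.IsHadamard) {j k : n} (hjk : j ≠ k) :
    2 * #{i | A i j = A i k} = Fintype.card n := by
  have hpm := hA.apply_eq_one_or_eq_neg_one
  have hprod (i : n) : A i j * A i k = 1 ∨ A i j * A i k = -1 := by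
    rcases hpm i j with h | h <;> rcases hpm i k with h' | h' <;> simp [h, h']
  have hagree :
      univ.filter (fun i => A i j * A i k = 1) = univ.filter (fun i => A i j = A i k) :=
    filter_congr fun i _ => by
      rcases hpm i j with h | h <;> rcases hpm i k with h' | h' <;> simp [h, h']
  rw [← hagree, two_mul_card_filter_eq_of_sum_eq_zero (fun i _ => hprod i)
    (hA.transpose.sum_mul_eq_zero_of_ne hjk) (Or.inl rfl), card_univ]

variable {k l : n}

lemma IsHadamard.two_mul_card_filter_eq (hA : A.IsHadamard) (hk : ∀ j, A k j = 1)
    (hlk : l ≠ k) {c : ℤ} (hc : c = 1 ∨ c = -1) : 2 * #{j | A l j = c} = Fintype.card n := by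
  rw [two_mul_card_filter_eq_of_sum_eq_zero (fun j _ => hA.apply_eq_one_or_eq_neg_one l j)
    (hA.sum_eq_zero_of_ne hk hlk) hc, card_univ]

lemma IsHadamard.two_mul_card_filter_filter_eq (hA : A.IsHadamard) (hk : ∀ j, A k j = 1)
    {i : n} (hik : i ≠ k) (hil : i ≠ l) {c d : ℤ} (hc : c = 1 ∨ c = -1) (hd : d = 1 ∨ d = -1) :
    2 * #{j ∈ {j | A l j = c} | A i j = d} = #{j | A l j = c} :=
  two_mul_card_filter_eq_of_sum_eq_zero (fun j _ => hA.apply_eq_one_or_eq_neg_one i j)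
    (sum_filter_eq_zero_of_sum_mul_eq_zero (fun j _ => hA.apply_eq_one_or_eq_neg_one l j)
      (hA.sum_eq_zero_of_ne hk hik) (hA.sum_mul_eq_zero_of_ne hil.symm) hc) hd

lemma IsHadamard.two_mul_card_filter_ne_and_ne_and_apply_eq (hA : A.IsHadamard)
    (hk : ∀ j, A k j = 1) (hkl : k ≠ l) {j j' : n} (hjj' : j ≠ j') :
    2 * (#{i | i ≠ k ∧ i ≠ l ∧ A i j = A i j'} + 1 + if A l j = A l j' then 1 else 0)
      = Fintype.card n := by
  have hcol := hA.two_mul_card_filter_apply_eq hjj'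
  have hrows := card_filter_ne_and_ne_and hkl (fun i => A i j = A i j')
  rw [if_pos (by rw [hk, hk])] at hrows
  omega

end Matrix

/-- Hadamard construction: from a Hadamard matrix of order 4n (n ≥ 2) with
all-+1 first row, identifying cancer types with the columns where the second
row is +1 and drugs with those where it is -1, each remaining row gives two
complementary blocks; the resulting 8n-4 blocks form a 2-part 2-design with
v1 = v2 = 2n, k1 = k2 = n, λ11 = λ22 = 2n-2 and λ12 = 2n-1. -/
theorem hadamard_two_part
    (n : ℕ) (hn : 2 ≤ n)
    (H : Matrix (Fin (4 * n)) (Fin (4 * n)) ℤ)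
    (hpm : ∀ i j, H i j = 1 ∨ H i j = -1)
    (hHad : H * H.transpose = (4 * n : ℤ) • 1)
    (hrow0 : ∀ j, H ⟨0, by omega⟩ j = 1) :
    -- there are 2n cancer types and 2n drugs
    ((Finset.univ.filter (fun j : Fin (4 * n) => H ⟨1, by omega⟩ j = 1)).card = 2 * n) ∧
    ((Finset.univ.filter (fun j : Fin (4 * n) => H ⟨1, by omega⟩ j = -1)).card = 2 * n) ∧
    -- there are 8n - 4 blocks
    ((Finset.univ.filter (fun t : Fin (4 * n) × Bool =>
        t.1 ≠ ⟨0, by omega⟩ ∧ t.1 ≠ ⟨1, by omega⟩)).card = 8 * n - 4) ∧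
    -- each block contains n cancer types and n drugs
    (∀ i : Fin (4 * n), i ≠ ⟨0, by omega⟩ → i ≠ ⟨1, by omega⟩ → ∀ e : Bool,
      ((Finset.univ.filter (fun j : Fin (4 * n) => H ⟨1, by omega⟩ j = 1)).filter
        (fun j => H i j = (if e then (1 : ℤ) else -1))).card = n ∧
      ((Finset.univ.filter (fun j : Fin (4 * n) => H ⟨1, by omega⟩ j = -1)).filter
        (fun j => H i j = (if e then (1 : ℤ) else -1))).card = n) ∧
    -- each pair of distinct cancer types lies in 2n-2 blocks
    (∀ j j' : Fin (4 * n), H ⟨1, by omega⟩ j = 1 → H ⟨1, by omega⟩ j' = 1 → j ≠ j' →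
      (Finset.univ.filter (fun t : Fin (4 * n) × Bool =>
        t.1 ≠ ⟨0, by omega⟩ ∧ t.1 ≠ ⟨1, by omega⟩ ∧
        H t.1 j = (if t.2 then (1 : ℤ) else -1) ∧
        H t.1 j' = (if t.2 then (1 : ℤ) else -1))).card = 2 * n - 2) ∧
    -- each pair of distinct drugs lies in 2n-2 blocks
    (∀ j j' : Fin (4 * n), H ⟨1, by omega⟩ j = -1 → H ⟨1, by omega⟩ j' = -1 → j ≠ j' →
      (Finset.univ.filter (fun t : Fin (4 * n) × Bool =>
        t.1 ≠ ⟨0, by omega⟩ ∧ t.1 ≠ ⟨1, by omega⟩ ∧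
        H t.1 j = (if t.2 then (1 : ℤ) else -1) ∧
        H t.1 j' = (if t.2 then (1 : ℤ) else -1))).card = 2 * n - 2) ∧
    -- each cancer type occurs with each drug in 2n-1 blocks
    (∀ j j' : Fin (4 * n), H ⟨1, by omega⟩ j = 1 → H ⟨1, by omega⟩ j' = -1 →
      (Finset.univ.filter (fun t : Fin (4 * n) × Bool =>
        t.1 ≠ ⟨0, by omega⟩ ∧ t.1 ≠ ⟨1, by omega⟩ ∧
        H t.1 j = (if t.2 then (1 : ℤ) else -1) ∧
        H t.1 j' = (if t.2 then (1 : ℤ) else -1))).card = 2 * n - 1) := by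
  set r0 : Fin (4 * n) := ⟨0, by omega⟩
  set r1 : Fin (4 * n) := ⟨1, by omega⟩
  have h01 : r0 ≠ r1 := by simp [r0, r1, Fin.ext_iff]
  have : Nonempty (Fin (4 * n)) := ⟨r0⟩
  have hA : H.IsHadamard := Matrix.isHadamard_of_mul_transpose hpm (by simpa using hHad)
  have hhalf {c : ℤ} (hc : c = 1 ∨ c = -1) : #{j | H r1 j = c} = 2 * n := by
    have := hA.two_mul_card_filter_eq hrow0 h01.symm hc
    rw [Fintype.card_fin] at this
    omega
  have hblock (i : Fin (4 * n)) (hi0 : i ≠ r0) (hi1 : i ≠ r1) {c : ℤ} (hc : c = 1 ∨ c = -1)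
      (e : Bool) : #{j ∈ {j | H r1 j = c} | H i j = if e then 1 else -1} = n := by
    have := hA.two_mul_card_filter_filter_eq hrow0 hi0 hi1 hc (bool_ite_eq_one_or_eq_neg_one e)
    rw [hhalf hc] at this
    omega
  have hpair (j j' : Fin (4 * n)) (hjj : j ≠ j') :
      #{t : Fin (4 * n) × Bool | t.1 ≠ r0 ∧ t.1 ≠ r1 ∧
        H t.1 j = (if t.2 then 1 else -1) ∧ H t.1 j' = (if t.2 then 1 else -1)}
        = 2 * n - 1 - if H r1 j = H r1 j' then 1 else 0 := by
    have hcount := hA.two_mul_card_filter_ne_and_ne_and_apply_eq hrow0 h01 hjj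
    have hblocks := card_filter_prod_bool_eq_card_filter_eq (fun i => i ≠ r0 ∧ i ≠ r1)
      (b := fun i => H i j') (fun i => hpm i j)
    simp only [and_assoc] at hblocks
    rw [Fintype.card_fin] at hcount
    rw [hblocks]
    split_ifs at hcount ⊢ <;> omega
  refine ⟨hhalf (Or.inl rfl), hhalf (Or.inr rfl), ?_, fun i hi0 hi1 e =>
    ⟨hblock i hi0 hi1 (Or.inl rfl) e, hblock i hi0 hi1 (Or.inr rfl) e⟩, ?_, ?_, ?_⟩
  · rw [card_filter_fst_ne_and_ne h01, Fintype.card_fin]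
    omega
  · intro j j' hj hj' hjj
    rw [hpair j j' hjj, if_pos (hj.trans hj'.symm)]
    omega
  · intro j j' hj hj' hjj
    rw [hpair j j' hjj, if_pos (hj.trans hj'.symm)]
    omega
  · intro j j' hj hj'
    have hne : H r1 j ≠ H r1 j' := by rw [hj, hj']; decide
    have hjj : j ≠ j' := by rintro rfl; exact hne rfl
    rw [hpair j j' hjj, if_neg hne, Nat.sub_zero]
end

section
/- Symmetric design construction: let Δ be a symmetric 2-(v,k,λ) design with λ ≥ 2, and let Γ be one block of Δ. Regard the k points of Γ as drugs and the remaining v-k points as cancer types. Then the v-1 blocks of Δ other than Γ, each split into its λ drugs (points in Γ) and k-λ cancer types (points outside Γ), form a 2-part 2-design with b = v-1, v1 = v-k, v2 = k, k1 = k-λ, k2 = λ, λ11 = λ12 = λ and λ22 = λ-1. -/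
open Finset

namespace Finset

variable {ι : Type*} [DecidableEq ι] (s : Finset ι) (p : ι → Prop) [DecidablePred p]

theorem filter_ne_and_eq_erase_filter (a : ι) :
    s.filter (fun i => i ≠ a ∧ p i) = (s.filter p).erase a := by
  ext i
  simp only [mem_filter, mem_erase]
  tauto

theorem card_filter_ne_and_of_not {a : ι} (h : ¬ p a) :
    #(s.filter (fun i => i ≠ a ∧ p i)) = #(s.filter p) := by
  rw [filter_ne_and_eq_erase_filter, erase_eq_of_notMem (by simp [h])]

theorem card_filter_ne_and_of_mem {a : ι} (ha : a ∈ s) (h : p a) :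
    #(s.filter (fun i => i ≠ a ∧ p i)) = #(s.filter p) - 1 := by
  rw [filter_ne_and_eq_erase_filter, card_erase_of_mem (mem_filter.2 ⟨ha, h⟩)]

end Finset

theorem symmetric_design_two_part_general
    (v k lam : ℕ)
    (Bl : Fin v → Finset (Fin v))
    (hcard : ∀ i, (Bl i).card = k)
    (hdes : ∀ x y : Fin v, x ≠ y →
      (Finset.univ.filter (fun i => x ∈ Bl i ∧ y ∈ Bl i)).card = lam)
    (hint : ∀ i i' : Fin v, i ≠ i' → (Bl i ∩ Bl i').card = lam)
    (i0 : Fin v) :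
    -- v1 = v - k cancer types (points outside Γ) and v2 = k drugs (points of Γ)
    ((Bl i0)ᶜ.card = v - k) ∧ ((Bl i0).card = k) ∧
    -- each remaining block has k1 = k - λ cancer types and k2 = λ drugs
    (∀ i, i ≠ i0 → ((Bl i) \ (Bl i0)).card = k - lam ∧ ((Bl i) ∩ (Bl i0)).card = lam) ∧
    -- pairs of cancer types concur in λ11 = λ of the remaining blocks
    (∀ x y : Fin v, x ∉ Bl i0 → y ∉ Bl i0 → x ≠ y →
      (Finset.univ.filter (fun i => i ≠ i0 ∧ x ∈ Bl i ∧ y ∈ Bl i)).card = lam) ∧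
    -- pairs of drugs concur in λ22 = λ - 1 of the remaining blocks
    (∀ x y : Fin v, x ∈ Bl i0 → y ∈ Bl i0 → x ≠ y →
      (Finset.univ.filter (fun i => i ≠ i0 ∧ x ∈ Bl i ∧ y ∈ Bl i)).card = lam - 1) ∧
    -- each cancer type occurs with each drug in λ12 = λ of the remaining blocks
    (∀ x y : Fin v, x ∉ Bl i0 → y ∈ Bl i0 →
      (Finset.univ.filter (fun i => i ≠ i0 ∧ x ∈ Bl i ∧ y ∈ Bl i)).card = lam) := by
  refine ⟨by rw [card_compl, hcard, Fintype.card_fin], hcard i0, ?_, ?_, ?_, ?_⟩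
  · intro i hi
    rw [card_sdiff, inter_comm, hint i i0 hi, hcard]
    exact ⟨rfl, rfl⟩
  · intro x y hx _ hxy
    rw [card_filter_ne_and_of_not _ _ fun h => hx h.1, hdes x y hxy]
  · intro x y hx hy hxy
    rw [card_filter_ne_and_of_mem _ _ (mem_univ i0) ⟨hx, hy⟩, hdes x y hxy]
  · intro x y hx hy
    rw [card_filter_ne_and_of_not _ _ fun h => hx h.1, hdes x y (by rintro rfl; exact hx hy)]

/-- Symmetric design construction: deleting one block Γ of a symmetric
2-(v,k,λ) design with λ ≥ 2, and regarding the points of Γ as drugs and the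
other points as cancer types, the remaining v-1 blocks form a 2-part 2-design
with b = v-1, v1 = v-k, v2 = k, k1 = k-λ, k2 = λ, λ11 = λ12 = λ, λ22 = λ-1. -/
theorem symmetric_design_two_part
    (v k lam : ℕ) (hlam : 2 ≤ lam) (hk : k < v)
    (Bl : Fin v → Finset (Fin v))
    (hcard : ∀ i, (Bl i).card = k)
    (hlameq : lam * (v - 1) = k * (k - 1))
    (hdes : ∀ x y : Fin v, x ≠ y →
      (Finset.univ.filter (fun i => x ∈ Bl i ∧ y ∈ Bl i)).card = lam)
    (hrep : ∀ x : Fin v, (Finset.univ.filter (fun i => x ∈ Bl i)).card = k)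
    (hint : ∀ i i' : Fin v, i ≠ i' → (Bl i ∩ Bl i').card = lam)
    (i0 : Fin v) :
    -- v1 = v - k cancer types (points outside Γ) and v2 = k drugs (points of Γ)
    ((Bl i0)ᶜ.card = v - k) ∧ ((Bl i0).card = k) ∧
    -- each remaining block has k1 = k - λ cancer types and k2 = λ drugs
    (∀ i, i ≠ i0 → ((Bl i) \ (Bl i0)).card = k - lam ∧ ((Bl i) ∩ (Bl i0)).card = lam) ∧
    -- pairs of cancer types concur in λ11 = λ of the remaining blocks
    (∀ x y : Fin v, x ∉ Bl i0 → y ∉ Bl i0 → x ≠ y →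
      (Finset.univ.filter (fun i => i ≠ i0 ∧ x ∈ Bl i ∧ y ∈ Bl i)).card = lam) ∧
    -- pairs of drugs concur in λ22 = λ - 1 of the remaining blocks
    (∀ x y : Fin v, x ∈ Bl i0 → y ∈ Bl i0 → x ≠ y →
      (Finset.univ.filter (fun i => i ≠ i0 ∧ x ∈ Bl i ∧ y ∈ Bl i)).card = lam - 1) ∧
    -- each cancer type occurs with each drug in λ12 = λ of the remaining blocks
    (∀ x y : Fin v, x ∉ Bl i0 → y ∈ Bl i0 →
      (Finset.univ.filter (fun i => i ≠ i0 ∧ x ∈ Bl i ∧ y ∈ Bl i)).card = lam) :=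
  symmetric_design_two_part_general v k lam Bl hcard hdes hint i0
end

section
/- C-swap: if (S_i, T_i), i = 1,…,b, is a 2-part 2-design with parameters (v1,v2,b,k1,k2,λ11,λ22,λ12) and v1 - k1 ≥ 2, then the blocks (C \ S_i, T_i), where C is the full set of cancer types, form a 2-part 2-design with parameters k1' = v1 - k1, λ11' = b - 2r1 + λ11, λ12' = r2 - λ12, and unchanged b, v1, v2, k2, λ22, where r1 = b*k1/v1 and r2 = b*k2/v2. -/
/-!
Each new count is expressed through the old ones by inclusion–exclusion over the blocks. The new
`λ₁₁` is positive because some block exists (as `λ₁₁ > 0`) and its complement contains two cancer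
types, which that block then misses together.
-/

open Finset

namespace Finset

variable {ι : Type*} [Fintype ι] (p q : ι → Prop) [DecidablePred p] [DecidablePred q]

theorem card_filter_and_add_card_filter_and_not :
    #{i | p i ∧ q i} + #{i | p i ∧ ¬q i} = #{i | p i} := by
  simpa only [filter_filter] using card_filter_add_card_filter_not (s := {i | p i}) q

theorem card_filter_not_and_add_card_filter_and :
    #{i | ¬p i ∧ q i} + #{i | p i ∧ q i} = #{i | q i} := by
  simpa only [and_comm (a := q _), add_comm] using card_filter_and_add_card_filter_and_not q p

theorem card_filter_not_and_not_add_card_filter_add_card_filter :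
    #{i | ¬p i ∧ ¬q i} + #{i | p i} + #{i | q i} = Fintype.card ι + #{i | p i ∧ q i} := by
  have hp := card_filter_and_add_card_filter_and_not p q
  have hnp := card_filter_and_add_card_filter_and_not (fun i => ¬p i) q
  have hq := card_filter_not_and_add_card_filter_and p q
  have hall := card_filter_add_card_filter_not (s := (univ : Finset ι)) (fun i => p i)
  rw [card_univ] at hall
  omega

end Finset

theorem c_swap_two_part_general
    (v1 v2 b k1 l11 l22 l12 r1 r2 : ℕ)
    (S : Fin b → Finset (Fin v1)) (T : Fin b → Finset (Fin v2))
    (hS : ∀ i, (S i).card = k1)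
    (hl11 : 0 < l11)
    (h11 : ∀ x y : Fin v1, x ≠ y →
      (Finset.univ.filter (fun i => x ∈ S i ∧ y ∈ S i)).card = l11)
    (h22 : ∀ x y : Fin v2, x ≠ y →
      (Finset.univ.filter (fun i => x ∈ T i ∧ y ∈ T i)).card = l22)
    (h12 : ∀ (x : Fin v1) (y : Fin v2),
      (Finset.univ.filter (fun i => x ∈ S i ∧ y ∈ T i)).card = l12)
    (hr1 : ∀ x : Fin v1, (Finset.univ.filter (fun i => x ∈ S i)).card = r1)
    (hr2 : ∀ y : Fin v2, (Finset.univ.filter (fun i => y ∈ T i)).card = r2)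
    (hswap : 2 ≤ v1 - k1) :
    -- new cancer blocks have size v1 - k1
    (∀ i, ((S i)ᶜ).card = v1 - k1) ∧
    -- λ11' = b - 2 r1 + λ11, stated additively, and λ11' > 0
    (∀ x y : Fin v1, x ≠ y →
      (Finset.univ.filter (fun i => x ∉ S i ∧ y ∉ S i)).card + 2 * r1 = b + l11) ∧
    (b + l11 > 2 * r1) ∧
    -- λ12' = r2 - λ12, stated additively
    (∀ (x : Fin v1) (y : Fin v2),
      (Finset.univ.filter (fun i => x ∉ S i ∧ y ∈ T i)).card + l12 = r2) ∧
    -- λ22 unchanged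
    (∀ x y : Fin v2, x ≠ y →
      (Finset.univ.filter (fun i => x ∈ T i ∧ y ∈ T i)).card = l22) := by
  have hcompl (i : Fin b) : (S i)ᶜ.card = v1 - k1 := by
    rw [card_compl, hS, Fintype.card_fin]
  have h11' (x y : Fin v1) (hxy : x ≠ y) : #{i | x ∉ S i ∧ y ∉ S i} + 2 * r1 = b + l11 := by
    have := card_filter_not_and_not_add_card_filter_add_card_filter (x ∈ S ·) (y ∈ S ·)
    rw [hr1, hr1, h11 x y hxy, Fintype.card_fin] at this
    omega
  obtain ⟨i₀, -⟩ := card_pos.mp <| (h11 ⟨0, by omega⟩ ⟨1, by omega⟩ (by simp)).symm ▸ hl11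
  obtain ⟨x, hx, y, hy, hxy⟩ := one_lt_card.mp (hcompl i₀ ▸ hswap : 1 < (S i₀)ᶜ.card)
  have hmissed : 0 < #{i | x ∉ S i ∧ y ∉ S i} :=
    card_pos.mpr ⟨i₀, by simpa using ⟨mem_compl.mp hx, mem_compl.mp hy⟩⟩
  refine ⟨hcompl, h11', by linarith [h11' x y hxy], fun x y => ?_, h22⟩
  simpa only [h12, hr2] using card_filter_not_and_add_card_filter_and (x ∈ S ·) (y ∈ T ·)

/-- C-swap: replacing the cancer-type set of every block of a 2-part 2-design
by its complement (assuming v1 - k1 ≥ 2) gives a 2-part 2-design with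
k1' = v1 - k1, λ11' = b - 2r1 + λ11 (which is positive), λ12' = r2 - λ12,
and b, v1, v2, k2, λ22 unchanged. -/
theorem c_swap_two_part
    (v1 v2 b k1 k2 l11 l22 l12 r1 r2 : ℕ)
    (S : Fin b → Finset (Fin v1)) (T : Fin b → Finset (Fin v2))
    (hS : ∀ i, (S i).card = k1) (hT : ∀ i, (T i).card = k2)
    (hk1 : 1 < k1) (hk1v : k1 < v1) (hk2 : 1 < k2) (hk2v : k2 < v2)
    (hl11 : 0 < l11) (hl22 : 0 < l22)
    (h11 : ∀ x y : Fin v1, x ≠ y →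
      (Finset.univ.filter (fun i => x ∈ S i ∧ y ∈ S i)).card = l11)
    (h22 : ∀ x y : Fin v2, x ≠ y →
      (Finset.univ.filter (fun i => x ∈ T i ∧ y ∈ T i)).card = l22)
    (h12 : ∀ (x : Fin v1) (y : Fin v2),
      (Finset.univ.filter (fun i => x ∈ S i ∧ y ∈ T i)).card = l12)
    (hr1 : ∀ x : Fin v1, (Finset.univ.filter (fun i => x ∈ S i)).card = r1)
    (hr2 : ∀ y : Fin v2, (Finset.univ.filter (fun i => y ∈ T i)).card = r2)
    (hswap : 2 ≤ v1 - k1) :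
    -- new cancer blocks have size v1 - k1
    (∀ i, ((S i)ᶜ).card = v1 - k1) ∧
    -- λ11' = b - 2 r1 + λ11, stated additively, and λ11' > 0
    (∀ x y : Fin v1, x ≠ y →
      (Finset.univ.filter (fun i => x ∉ S i ∧ y ∉ S i)).card + 2 * r1 = b + l11) ∧
    (b + l11 > 2 * r1) ∧
    -- λ12' = r2 - λ12, stated additively
    (∀ (x : Fin v1) (y : Fin v2),
      (Finset.univ.filter (fun i => x ∉ S i ∧ y ∈ T i)).card + l12 = r2) ∧
    -- λ22 unchanged
    (∀ x y : Fin v2, x ≠ y →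
      (Finset.univ.filter (fun i => x ∈ T i ∧ y ∈ T i)).card = l22) :=
  c_swap_two_part_general v1 v2 b k1 l11 l22 l12 r1 r2 S T hS hl11 h11 h22 h12 hr1 hr2 hswap
end

section
/- Orthogonal array construction (c = 1 case): let Δ_1, …, Δ_m be 2-designs, where Δ_i is a 2-(v_i, k_i, λ_i) design with b_i blocks, and let Γ be an orthogonal array of strength 2 with s rows and m columns, column i having b_i symbols (each symbol of column i appearing equally often, and each ordered pair of symbols from two columns appearing equally often). Index the blocks of Δ_i by the symbols of column i. Then the s blocks (B_1(ρ),…,B_m(ρ)) for ρ ranging over rows of Γ, where B_i(ρ) is the block of Δ_i indexed by the entry of row ρ in column i, form an m-part 2-design of strength 2. -/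
/-!
Count rows of `Γ` through the blocks they select. For fixed `x ≠ y` in factor `i`, a row
qualifies exactly when its `i`-th symbol indexes one of the `λᵢ` blocks through `x, y`,
and each symbol occurs in `s / bᵢ` rows, giving `λᵢ · s / bᵢ`. For `x` in factor `i` and
`y` in factor `j ≠ i`, a row qualifies when its pair of symbols indexes a block through
`x` and one through `y`; there are `rᵢ rⱼ` such pairs, where the replication number
`r = λ(v - 1)/(k - 1)` of a 2-design does not depend on the point (double count the
flags `(block, y)` with `x, y` in the block), and each pair occurs in `s / (bᵢ bⱼ)` rows.
-/

open Finset

section Counting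

variable {α β : Type*} [Fintype α] [Fintype β] [DecidableEq β]

theorem card_filter_comp_eq_card_filter_mul (f : α → β) (P : β → Prop) [DecidablePred P]
    {c : ℕ} (hc : ∀ b, P b → #{a | f a = b} = c) :
    #{a | P (f a)} = #{b | P b} * c := by
  rw [card_eq_sum_card_fiberwise (t := {b | P b}) (f := f) fun a ha => by simpa using ha,
    ← smul_eq_mul, ← sum_const]
  refine sum_congr rfl fun b hb => ?_
  rw [mem_filter] at hb
  rw [← hc b hb.2, filter_filter]
  exact congrArg card <| filter_congr fun a _ => ⟨And.right, fun hab => ⟨hab ▸ hb.2, hab⟩⟩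

end Counting

section Design

variable {ι V : Type*} [Fintype ι] [Fintype V] [DecidableEq V]
  (B : ι → Finset V) {k lam : ℕ}

theorem card_filter_mem_mul_eq (hcard : ∀ a, #(B a) = k)
    (hpair : ∀ x y, x ≠ y → #{a | x ∈ B a ∧ y ∈ B a} = lam) (x : V) :
    #{a | x ∈ B a} * (k - 1) = lam * (Fintype.card V - 1) := by
  have h := card_mul_eq_card_mul (s := {a | x ∈ B a}) (t := univ.erase x)
    (fun a y => y ∈ B a) (m := k - 1) (n := lam)
    (fun a ha => by
      rw [mem_filter] at ha
      rw [bipartiteAbove, ← hcard a, ← card_erase_of_mem ha.2]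
      congr 1
      ext y
      simp [and_comm])
    (fun y hy => by
      rw [bipartiteBelow, filter_filter, ← hpair x y (ne_of_mem_erase hy).symm])
  rwa [card_erase_of_mem (mem_univ x), card_univ, mul_comm _ lam] at h

theorem card_filter_mem_eq_div (hk : 1 < k) (hcard : ∀ a, #(B a) = k)
    (hpair : ∀ x y, x ≠ y → #{a | x ∈ B a ∧ y ∈ B a} = lam) (x : V) :
    #{a | x ∈ B a} = lam * (Fintype.card V - 1) / (k - 1) :=
  Nat.eq_div_of_mul_eq_left (by omega) (card_filter_mem_mul_eq B hcard hpair x)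

end Design

/-- Orthogonal array construction (c = 1): given 2-(v_i,k_i,λ_i) designs Δ_i
with b_i blocks and an orthogonal array Γ of strength 2 with s rows and m
columns, column i having b_i symbols, the s blocks obtained by combining, for
each row ρ, the blocks of the Δ_i indexed by the entries of ρ form an m-part
2-design of strength 2. -/
theorem orthogonal_array_construction
    (m s : ℕ) (hs : 0 < s)
    (v k lam bnum : Fin m → ℕ)
    (Bl : ∀ i : Fin m, Fin (bnum i) → Finset (Fin (v i)))
    (hcard : ∀ i a, (Bl i a).card = k i)
    (hkv : ∀ i, 1 < k i ∧ k i < v i)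
    (hlam : ∀ i, 0 < lam i)
    (hdes : ∀ (i : Fin m) (x y : Fin (v i)), x ≠ y →
      (Finset.univ.filter (fun a => x ∈ Bl i a ∧ y ∈ Bl i a)).card = lam i)
    (Γ : Fin s → ∀ i : Fin m, Fin (bnum i))
    -- each symbol appears s / b_i times in column i
    (hsym : ∀ (i : Fin m) (a : Fin (bnum i)),
      (Finset.univ.filter (fun ρ => Γ ρ i = a)).card * bnum i = s)
    -- strength 2: each ordered pair of symbols appears equally often in each
    -- ordered pair of distinct columns
    (hOA : ∀ i j : Fin m, i ≠ j → ∀ (a : Fin (bnum i)) (c : Fin (bnum j)),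
      (Finset.univ.filter (fun ρ => Γ ρ i = a ∧ Γ ρ j = c)).card *
        (bnum i * bnum j) = s) :
    -- within-factor concurrences are constant and positive
    (∀ i : Fin m, ∃ l > 0, ∀ x y : Fin (v i), x ≠ y →
      (Finset.univ.filter (fun ρ : Fin s =>
        x ∈ Bl i (Γ ρ i) ∧ y ∈ Bl i (Γ ρ i))).card = l) ∧
    -- cross-factor concurrences are constant
    (∀ i j : Fin m, i ≠ j → ∃ l, ∀ (x : Fin (v i)) (y : Fin (v j)),
      (Finset.univ.filter (fun ρ : Fin s =>
        x ∈ Bl i (Γ ρ i) ∧ y ∈ Bl j (Γ ρ j))).card = l) := by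
  have ρ₀ : Fin s := ⟨0, hs⟩
  have hb : ∀ i, 0 < bnum i := fun i => Fin.pos_iff_nonempty.mpr ⟨Γ ρ₀ i⟩
  have hcol : ∀ i a, #{ρ | Γ ρ i = a} = s / bnum i := fun i a =>
    Nat.eq_div_of_mul_eq_left (hb i).ne' (hsym i a)
  have hcols : ∀ i j, i ≠ j → ∀ p : Fin (bnum i) × Fin (bnum j),
      #{ρ | (Γ ρ i, Γ ρ j) = p} = s / (bnum i * bnum j) := fun i j hij p => by
    simp only [Prod.ext_iff]
    exact Nat.eq_div_of_mul_eq_left (Nat.mul_pos (hb i) (hb j)).ne' (hOA i j hij _ _)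
  have hrep : ∀ i x, #{a | x ∈ Bl i a} = lam i * (v i - 1) / (k i - 1) := fun i x => by
    simpa using card_filter_mem_eq_div (Bl i) (hkv i).1 (hcard i) (hdes i) x
  refine ⟨fun i => ⟨lam i * (s / bnum i), Nat.mul_pos (hlam i) ?_, fun x y hxy => ?_⟩,
    fun i j hij => ⟨lam i * (v i - 1) / (k i - 1) * (lam j * (v j - 1) / (k j - 1)) *
      (s / (bnum i * bnum j)), fun x y => ?_⟩⟩
  · rw [← hcol i (Γ ρ₀ i)]
    exact card_pos.2 ⟨ρ₀, by simp⟩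
  · rw [← hdes i x y hxy]
    exact card_filter_comp_eq_card_filter_mul (fun ρ => Γ ρ i) (fun a => x ∈ Bl i a ∧ y ∈ Bl i a)
      fun a _ => hcol i a
  · refine (card_filter_comp_eq_card_filter_mul (fun ρ => (Γ ρ i, Γ ρ j))
      (fun p => x ∈ Bl i p.1 ∧ y ∈ Bl j p.2) fun p _ => hcols i j hij p).trans ?_
    rw [← univ_product_univ, filter_product (fun a => x ∈ Bl i a) (fun c => y ∈ Bl j c),
      card_product, hrep i x, hrep j y]
end

section
/- Bose's inequality via the 2-part framework: let Δ be a resolvable 2-(v,k,λ) design with b blocks, replication number r, and r resolution classes. Label a set of r 'drugs' by the resolution classes and place drug j in every block of class j. Then the rank argument for c-partitionable 2-part designs gives b ≥ v + r - 1. -/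
/-!
Stack the point-block incidence matrix of the design on the class-block incidence matrix to get a
`(v + r) × b` matrix `N`. Its Gram matrix is `N Nᵀ = [[(r - λ) I + λ J, J], [J, diag m]]`, where
`m j` is the number of blocks of class `j`. Because `r(k - 1) = λ(v - 1)` and `k < v` give
`λ < r`, a kernel vector of `N Nᵀ` vanishing at one point vanishes everywhere, so
`v + r - 1 ≤ rank (N Nᵀ) ≤ rank N ≤ b`.
-/

open Finset Matrix

theorem Matrix.card_le_rank_add_one_of_ker_eval_injective {m n K : Type*} [Fintype n] [Field K]
    (M : Matrix m n K) (p : n) (h : ∀ u, M *ᵥ u = 0 → u p = 0 → u = 0) :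
    Fintype.card n ≤ M.rank + 1 := by
  let eval : LinearMap.ker M.mulVecLin →ₗ[K] K := (LinearMap.proj p).comp (Submodule.subtype _)
  have heval : Function.Injective eval := by
    rw [← LinearMap.ker_eq_bot, LinearMap.ker_eq_bot']
    rintro ⟨u, hu⟩ hup
    exact Subtype.ext (h u hu hup)
  have hker := LinearMap.finrank_le_finrank_of_injective heval
  have hdim := LinearMap.finrank_range_add_finrank_ker M.mulVecLin
  rw [Module.finrank_self] at hker
  rw [Module.finrank_fintype_fun_eq_card] at hdim
  rw [rank]
  omega

section Gram

variable {α κ K : Type*} [DecidableEq α] [DecidableEq κ]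

def resolvableGram [Zero K] [One K] (r lam : K) (m : κ → K) : Matrix (α ⊕ κ) (α ⊕ κ) K :=
  fromBlocks (of fun x y => if x = y then r else lam) (of fun _ _ => 1) (of fun _ _ => 1)
    (diagonal m)

variable [Fintype α] [Fintype κ] [Field K]

theorem resolvableGram_mulVec_inl (r lam : K) (m : κ → K) (u : α ⊕ κ → K) (x : α) :
    (resolvableGram r lam m *ᵥ u) (Sum.inl x) =
      (r - lam) * u (Sum.inl x) + lam * ∑ y, u (Sum.inl y) + ∑ j, u (Sum.inr j) := by
  have hrow : ∀ y, (if x = y then r else lam) * u (Sum.inl y) =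
      (if x = y then (r - lam) * u (Sum.inl y) else 0) + lam * u (Sum.inl y) := by
    intro y; split_ifs <;> ring
  simp [resolvableGram, mulVec, dotProduct, hrow, sum_add_distrib, mul_sum]

theorem resolvableGram_mulVec_inr (r lam : K) (m : κ → K) (u : α ⊕ κ → K) (j : κ) :
    (resolvableGram r lam m *ᵥ u) (Sum.inr j) = ∑ y, u (Sum.inl y) + m j * u (Sum.inr j) := by
  simp [resolvableGram, mulVec, dotProduct, diagonal_apply]

theorem resolvableGram_mulVec_eq_zero {r lam : K} (hrl : r ≠ lam) {m : κ → K}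
    (hm : ∀ j, m j ≠ 0) {u : α ⊕ κ → K} (hu : resolvableGram r lam m *ᵥ u = 0) {x₀ : α}
    (hx₀ : u (Sum.inl x₀) = 0) : u = 0 := by
  have hpoint (x : α) := resolvableGram_mulVec_inl r lam m u x
  have hclass (j : κ) := resolvableGram_mulVec_inr r lam m u j
  simp only [hu, Pi.zero_apply] at hpoint hclass
  have hinl (x : α) : u (Sum.inl x) = 0 := by
    have : (r - lam) * u (Sum.inl x) = 0 := by
      linear_combination hpoint x₀ - hpoint x + (r - lam) * hx₀
    simpa [sub_ne_zero.mpr hrl] using this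
  have hinr (j : κ) : u (Sum.inr j) = 0 := by
    simpa [hinl, hm j] using (hclass j).symm
  ext (x | j)
  exacts [hinl x, hinr j]

end Gram

section Design

variable {α ι κ : Type*} {A : ι → Finset α} {g : ι → κ}

theorem card_filter_class_mem_eq_one [Fintype ι] [DecidableEq α] [DecidableEq κ]
    (hres : ∀ j x, ∃! i, g i = j ∧ x ∈ A i) (j : κ) (x : α) :
    #{i | g i = j ∧ x ∈ A i} = 1 := by
  simpa [card_eq_one_iff_existsUnique] using hres j x

theorem card_filter_mem_eq_card_classes [Fintype ι] [Fintype κ] [DecidableEq α]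
    (hres : ∀ j x, ∃! i, g i = j ∧ x ∈ A i) (x : α) :
    #{i | x ∈ A i} = Fintype.card κ := by
  refine card_nbij g (fun _ _ => mem_coe.mpr (mem_univ _)) ?_ fun j _ => ?_
  · intro i₁ hi₁ i₂ hi₂ hg
    simp only [coe_filter, mem_univ, true_and, Set.mem_ofPred_eq] at hi₁ hi₂
    exact (hres (g i₁) x).unique ⟨rfl, hi₁⟩ ⟨hg.symm, hi₂⟩
  · obtain ⟨i, ⟨hi, hx⟩, -⟩ := hres j x
    exact ⟨i, by simpa using hx, hi⟩

theorem card_filter_mem_mul_pred_eq [Fintype α] [Fintype ι] [DecidableEq α] {k lam : ℕ}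
    (hcard : ∀ i, #(A i) = k) (hdes : ∀ x y, x ≠ y → #{i | x ∈ A i ∧ y ∈ A i} = lam)
    (x : α) : #{i | x ∈ A i} * (k - 1) = (Fintype.card α - 1) * lam := by
  have := card_mul_eq_card_mul (fun i y => y ∈ A i) (s := {i | x ∈ A i}) (t := univ.erase x)
    (m := k - 1) (n := lam) ?_ ?_
  · simpa using this
  · intro i hi
    have hx : x ∈ A i := by simpa using hi
    rw [bipartiteAbove, filter_erase, filter_mem_eq_inter, univ_inter, card_erase_of_mem hx,
      hcard]
  · intro y hy
    rw [bipartiteBelow, filter_filter]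
    exact hdes x y (ne_of_mem_erase hy).symm

def pointClassIncidence (K : Type*) [Zero K] [One K] (A : ι → Finset α) (g : ι → κ)
    [DecidableEq α] [DecidableEq κ] : Matrix (α ⊕ κ) ι K :=
  of fun p i => Sum.elim (fun x => if x ∈ A i then 1 else 0) (fun j => if g i = j then 1 else 0) p

theorem pointClassIncidence_mul_transpose (K : Type*) [Semiring K] [Fintype α] [Fintype ι]
    [Fintype κ] [DecidableEq α] [DecidableEq κ] {lam : ℕ}
    (hdes : ∀ x y, x ≠ y → #{i | x ∈ A i ∧ y ∈ A i} = lam)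
    (hres : ∀ j x, ∃! i, g i = j ∧ x ∈ A i) :
    pointClassIncidence K A g * (pointClassIncidence K A g)ᵀ =
      resolvableGram (Fintype.card κ : K) lam fun j => (#{i | g i = j} : K) := by
  ext (x | j) (y | j') <;>
    simp only [pointClassIncidence, resolvableGram, mul_apply, transpose_apply, of_apply,
      Sum.elim_inl, Sum.elim_inr, ite_zero_mul_ite_zero, mul_one, sum_boole, fromBlocks_apply₁₁,
      fromBlocks_apply₁₂, fromBlocks_apply₂₁, fromBlocks_apply₂₂, diagonal_apply]
  · split_ifs with hxy
    · simp [hxy, card_filter_mem_eq_card_classes hres]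
    · simp [hdes x y hxy]
  · simp [and_comm, card_filter_class_mem_eq_one hres]
  · simp [card_filter_class_mem_eq_one hres]
  · split_ifs with hjj
    · simp [hjj]
    · rw [filter_false_of_mem fun i _ h => hjj (h.1.symm.trans h.2), card_empty, Nat.cast_zero]

end Design

/-- Bose's inequality via the 2-part framework: a resolvable 2-(v,k,λ) design
with b blocks and r resolution classes satisfies b ≥ v + r - 1. -/
theorem bose_inequality
    (v b k lam r : ℕ) (hk1 : 1 < k) (hkv : k < v) (hlam : 0 < lam)
    (A : Fin b → Finset (Fin v))
    (hcard : ∀ i, (A i).card = k)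
    (hdes : ∀ x y : Fin v, x ≠ y →
      (Finset.univ.filter (fun i => x ∈ A i ∧ y ∈ A i)).card = lam)
    (g : Fin b → Fin r)
    -- each resolution class is a partition of the point set
    (hres : ∀ (j : Fin r) (x : Fin v), ∃! i : Fin b, g i = j ∧ x ∈ A i) :
    b + 1 ≥ v + r := by
  let x₀ : Fin v := ⟨0, by omega⟩
  have hlr : lam < r := by
    have hcount := card_filter_mem_mul_pred_eq hcard hdes x₀
    rw [card_filter_mem_eq_card_classes hres, Fintype.card_fin, Fintype.card_fin] at hcount
    have hmul : lam * (k - 1) < r * (k - 1) := by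
      rw [hcount, mul_comm lam]
      exact Nat.mul_lt_mul_of_pos_right (by omega) hlam
    exact Nat.lt_of_mul_lt_mul_right hmul
  have hclass (j : Fin r) : (#{i | g i = j} : ℚ) ≠ 0 := by
    obtain ⟨i, ⟨hi, -⟩, -⟩ := hres j x₀
    exact Nat.cast_ne_zero.mpr (card_ne_zero_of_mem (mem_filter.mpr ⟨mem_univ i, hi⟩))
  let N := pointClassIncidence ℚ A g
  have hker (u : Fin v ⊕ Fin r → ℚ) (hu : (N * Nᵀ) *ᵥ u = 0) (hx₀ : u (Sum.inl x₀) = 0) :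
      u = 0 := by
    rw [pointClassIncidence_mul_transpose ℚ hdes hres] at hu
    exact resolvableGram_mulVec_eq_zero (by simpa using hlr.ne') hclass hu hx₀
  calc v + r = Fintype.card (Fin v ⊕ Fin r) := by simp
    _ ≤ (N * Nᵀ).rank + 1 := card_le_rank_add_one_of_ker_eval_injective _ _ hker
    _ ≤ N.rank + 1 := by grw [rank_mul_le_left]
    _ ≤ b + 1 := by grw [rank_le_card_width, Fintype.card_fin]
end
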